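/- Let k be a field and S = S_uni the k-algebra generated by x₀, x₁, x₂, … with relations xₙ xₙ₊₁ = 0. Then the bounded below complex of free left S-modules with one generator, 0 → S →(·x₀) S →(·x₁) S →(·x₂) S → ⋯, where each differential is right multiplication by xₙ, is acyclic. -/

import Mathlib

universe u

/-- The defining relations of the universal algebra `S_uni`: `xₙ xₙ₊₁ = 0` for all `n ≥ 0`. -/
def SuniRel (k : Type u) [Field k] : FreeAlgebra k ℕ → FreeAlgebra k ℕ → Prop :=
  fun a b => ∃ n : ℕ, a = FreeAlgebra.ι k n * FreeAlgebra.ι k (n + 1) ∧ b = 0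

/-- The `k`-algebra `S_uni` generated by elements `x₀, x₁, x₂, …` subject only to the
relations `xₙ xₙ₊₁ = 0` for all `n ≥ 0`. -/
abbrev Suni (k : Type u) [Field k] : Type u := RingQuot (SuniRel k)

/-- The generator `xₙ` of `S_uni`. -/
noncomputable def xgen (k : Type u) [Field k] (n : ℕ) : Suni k :=
  RingQuot.mkAlgHom k (SuniRel k) (FreeAlgebra.ι k n)

/-!
Call a word in the letters `0, 1, 2, …` normal if no letter `n` is immediately followed by
`n + 1`. Letting `xₙ` append the letter `n` and then discard non-normal words defines a right
action of `S` on the `k`-span of the normal words; its orbit map at the empty word is a section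
of the evaluation of words in `S`, so the normal words form a basis of `S` in which `· xₙ`
appends `n` where this keeps the word normal. Appending `0` always does, so `· x₀` is injective;
and if `s xₙ₊₁ = 0`, every normal word in the support of `s` ends with `n`, so `s` is a multiple
of `xₙ` on the right.
-/

theorem List.prod_map_eq_zero_of_not_isChain {α M₀ : Type*} [MonoidWithZero M₀]
    {R : α → α → Prop} (x : α → M₀) (hx : ∀ a b, ¬ R a b → x a * x b = 0) :
    ∀ {l : List α}, ¬ l.IsChain R → (l.map x).prod = 0
  | [] | [_] => by simp
  | a :: b :: l => by
    rw [List.isChain_cons_cons, not_and_or]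
    rintro (hab | hl)
    · simp [← mul_assoc, hx a b hab]
    · rw [List.map_cons, List.prod_cons, List.prod_map_eq_zero_of_not_isChain x hx hl, mul_zero]

namespace Suni

open Finsupp

def IsNormalWord (w : FreeMonoid ℕ) : Prop :=
  w.toList.IsChain fun a b => b ≠ a + 1

instance : DecidablePred IsNormalWord := fun w =>
  inferInstanceAs (Decidable (w.toList.IsChain _))

theorem IsNormalWord.of_mul_left {w v : FreeMonoid ℕ} (h : IsNormalWord (w * v)) :
    IsNormalWord w :=
  List.IsChain.left_of_append h

theorem isNormalWord_mul_of_iff {w : FreeMonoid ℕ} {n : ℕ} :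
    IsNormalWord (w * .of n) ↔ IsNormalWord w ∧ ∀ a ∈ w.toList.getLast?, n ≠ a + 1 := by
  simp [IsNormalWord, List.isChain_append]

variable (k : Type u) [Field k]

theorem xgen_mul_xgen_succ (n : ℕ) : xgen k n * xgen k (n + 1) = 0 := by
  simpa [xgen] using RingQuot.mkAlgHom_rel k (s := SuniRel k) ⟨n, rfl, rfl⟩

theorem lift_xgen_eq_zero_of_not_isNormalWord {w : FreeMonoid ℕ} (hw : ¬ IsNormalWord w) :
    FreeMonoid.lift (xgen k) w = 0 := by
  rw [FreeMonoid.lift_apply]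
  refine List.prod_map_eq_zero_of_not_isChain _ (fun a b hab => ?_) hw
  rw [not_not.1 hab, xgen_mul_xgen_succ]

local notation "V" => FreeMonoid ℕ →₀ k

noncomputable def normalPart : V →ₗ[k] V where
  toFun := filter IsNormalWord
  map_add' _ _ := filter_add
  map_smul' _ _ := filter_smul

noncomputable def appendLetter (n : ℕ) : V →ₗ[k] V :=
  lmapDomain k k (· * FreeMonoid.of n)

noncomputable def rightAct (n : ℕ) : V →ₗ[k] V :=
  normalPart k ∘ₗ appendLetter k n

theorem rightAct_single (w : FreeMonoid ℕ) (n : ℕ) (b : k) :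
    rightAct k n (single w b) = (single (w * .of n) b).filter IsNormalWord := by
  simp [rightAct, appendLetter, normalPart]

theorem rightAct_comp_normalPart (n : ℕ) : rightAct k n ∘ₗ normalPart k = rightAct k n := by
  refine lhom_ext fun w b => ?_
  by_cases hw : IsNormalWord w
  · simp [normalPart, filter_single_of_pos _ hw]
  · have hwn : ¬ IsNormalWord (w * .of n) := fun h => hw h.of_mul_left
    simp [normalPart, filter_single_of_neg _ hw, rightAct_single, filter_single_of_neg _ hwn]

theorem rightAct_succ_comp_rightAct (n : ℕ) : rightAct k (n + 1) ∘ₗ rightAct k n = 0 := by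
  refine lhom_ext fun w b => ?_
  have h : ¬ IsNormalWord (w * .of n * .of (n + 1)) := by
    simp [isNormalWord_mul_of_iff]
  by_cases hw : IsNormalWord (w * .of n)
  · simp [rightAct_single, filter_single_of_pos _ hw, filter_single_of_neg _ h]
  · simp [rightAct_single, filter_single_of_neg _ hw]

noncomputable def normalWordAction : Suni k →ₐ[k] (Module.End k V)ᵐᵒᵖ :=
  RingQuot.liftAlgHom k ⟨FreeAlgebra.lift k fun n => .op (rightAct k n), by
    rintro _ _ ⟨n, rfl, rfl⟩
    rw [map_mul, FreeAlgebra.lift_ι_apply, FreeAlgebra.lift_ι_apply, ← MulOpposite.op_mul,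
      Module.End.mul_eq_comp, rightAct_succ_comp_rightAct, map_zero, MulOpposite.op_zero]⟩

theorem normalWordAction_xgen (n : ℕ) : normalWordAction k (xgen k n) = .op (rightAct k n) := by
  simp [normalWordAction, xgen, RingQuot.liftAlgHom_mkAlgHom_apply]

noncomputable def normalForm : Suni k →ₗ[k] V :=
  LinearMap.applyₗ (single 1 1) ∘ₗ (MulOpposite.opLinearEquiv k).symm.toLinearMap ∘ₗ
    (normalWordAction k).toLinearMap

theorem normalForm_one : normalForm k 1 = single 1 1 := by
  simp [normalForm]

theorem normalForm_mul_xgen (s : Suni k) (n : ℕ) :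
    normalForm k (s * xgen k n) = rightAct k n (normalForm k s) := by
  simp [normalForm, normalWordAction_xgen]

noncomputable def evalWords : V →ₗ[k] Suni k :=
  linearCombination k (FreeMonoid.lift (xgen k))

theorem evalWords_surjective : Function.Surjective (evalWords k) := by
  have hadjoin : Algebra.adjoin k (Set.range (xgen k)) = ⊤ := by
    rw [show Set.range (xgen k) = RingQuot.mkAlgHom k (SuniRel k) '' Set.range (FreeAlgebra.ι k)
      from Set.range_comp _ _, ← AlgHom.map_adjoin, FreeAlgebra.adjoin_range_ι,
      Algebra.map_top, AlgHom.range_eq_top]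
    exact RingQuot.mkAlgHom_surjective k _
  rw [← LinearMap.range_eq_top, evalWords, range_linearCombination, ← MonoidHom.coe_mrange,
    FreeMonoid.mrange_lift, ← Algebra.adjoin_eq_span, hadjoin, Algebra.top_toSubmodule]

theorem evalWords_comp_normalPart : evalWords k ∘ₗ normalPart k = evalWords k := by
  refine lhom_ext fun w b => ?_
  by_cases hw : IsNormalWord w
  · simp [normalPart, filter_single_of_pos _ hw]
  · simp [normalPart, filter_single_of_neg _ hw, evalWords,
      lift_xgen_eq_zero_of_not_isNormalWord k hw]

theorem evalWords_appendLetter (f : V) (n : ℕ) :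
    evalWords k (appendLetter k n f) = evalWords k f * xgen k n := by
  induction f using Finsupp.induction_linear with
  | zero => simp
  | add f g hf hg => simp [hf, hg, add_mul]
  | single w b => simp [evalWords, appendLetter]

theorem normalForm_lift_xgen (w : FreeMonoid ℕ) :
    normalForm k (FreeMonoid.lift (xgen k) w) = normalPart k (single w 1) := by
  obtain ⟨l, rfl⟩ := FreeMonoid.ofList.surjective w
  induction l using List.reverseRecOn with
  | nil =>
    rw [FreeMonoid.ofList_nil, map_one, normalForm_one]
    exact (filter_single_of_pos _ List.IsChain.nil).symm
  | append_singleton l n ih =>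
    rw [FreeMonoid.ofList_append, FreeMonoid.ofList_singleton, map_mul, FreeMonoid.lift_eval_of,
      normalForm_mul_xgen, ih, ← LinearMap.comp_apply, rightAct_comp_normalPart, rightAct]
    simp [appendLetter]

theorem normalForm_comp_evalWords : normalForm k ∘ₗ evalWords k = normalPart k :=
  lhom_ext fun w b => by
    rw [LinearMap.comp_apply, evalWords, linearCombination_single, map_smul, normalForm_lift_xgen,
      ← map_smul, smul_single_one]

theorem evalWords_normalForm (s : Suni k) : evalWords k (normalForm k s) = s := by
  obtain ⟨f, rfl⟩ := evalWords_surjective k s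
  rw [← LinearMap.comp_apply (normalForm k), normalForm_comp_evalWords,
    ← LinearMap.comp_apply, evalWords_comp_normalPart]

theorem normalForm_mem_supported (s : Suni k) :
    normalForm k s ∈ supported k k {w | IsNormalWord w} := by
  obtain ⟨f, rfl⟩ := evalWords_surjective k s
  rw [← LinearMap.comp_apply, normalForm_comp_evalWords, mem_supported]
  intro w hw
  simp only [normalPart, LinearMap.coe_mk, AddHom.coe_mk, Finset.coe_filter, support_filter] at hw
  exact hw.2

variable {k}

theorem exists_getLast?_of_rightAct_eq_zero {f : V} (hf : f ∈ supported k k {w | IsNormalWord w})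
    {m : ℕ} (h : rightAct k m f = 0) {w : FreeMonoid ℕ} (hw : w ∈ f.support) :
    ∃ a ∈ w.toList.getLast?, m = a + 1 := by
  have hcoeff : rightAct k m f (w * .of m) = if IsNormalWord (w * .of m) then f w else 0 := by
    simp [rightAct, appendLetter, normalPart, filter_apply,
      mapDomain_apply (mul_left_injective _)]
  rw [h, Finsupp.zero_apply, eq_comm, ite_eq_right_iff] at hcoeff
  have hwm : ¬ IsNormalWord (w * .of m) := fun hn => mem_support_iff.1 hw (hcoeff hn)
  rw [isNormalWord_mul_of_iff] at hwm
  simpa using not_and.1 hwm ((mem_supported k f).1 hf hw)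

theorem eq_zero_of_rightAct_zero_eq_zero {f : V} (hf : f ∈ supported k k {w | IsNormalWord w})
    (h : rightAct k 0 f = 0) : f = 0 := by
  refine support_eq_empty.1 (Finset.eq_empty_of_forall_notMem fun w hw => ?_)
  obtain ⟨a, -, ha⟩ := exists_getLast?_of_rightAct_eq_zero hf h hw
  omega

theorem mem_range_appendLetter_of_rightAct_succ_eq_zero {f : V}
    (hf : f ∈ supported k k {w | IsNormalWord w}) {n : ℕ} (h : rightAct k (n + 1) f = 0) :
    f ∈ LinearMap.range (appendLetter k n) := by
  refine ⟨mapDomain (fun w => .ofList w.toList.dropLast) f, ?_⟩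
  rw [appendLetter, lmapDomain_apply, ← mapDomain_comp]
  refine (mapDomain_congr fun w hw => ?_).trans mapDomain_id
  obtain ⟨a, ha, hna⟩ := exists_getLast?_of_rightAct_eq_zero hf h hw
  obtain rfl : n = a := by omega
  exact congrArg FreeMonoid.ofList (List.dropLast_append_getLast? n ha)

end Suni

open Suni

/-- The complex `0 → S → S → S → ⋯` of free left `S_uni`-modules with one generator, with
differentials given by right multiplication by `x₀, x₁, x₂, …`, is acyclic. -/
theorem suni_complex_acyclic (k : Type u) [Field k] :
    Function.Injective (fun s : Suni k => s * xgen k 0) ∧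
    (∀ n : ℕ, ∀ s : Suni k, (s * xgen k n) * xgen k (n + 1) = 0) ∧
    (∀ n : ℕ, Function.Exact (fun s : Suni k => s * xgen k n)
      (fun s : Suni k => s * xgen k (n + 1))) := by
  have complex (n : ℕ) (s : Suni k) : s * xgen k n * xgen k (n + 1) = 0 := by
    rw [mul_assoc, xgen_mul_xgen_succ, mul_zero]
  refine ⟨(injective_iff_map_eq_zero (AddMonoidHom.mulRight (xgen k 0))).2
    fun s (hs : s * xgen k 0 = 0) => ?_, complex,
    fun n s => ⟨fun (hs : s * xgen k (n + 1) = 0) => ?_, ?_⟩⟩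
  · have h0 : rightAct k 0 (normalForm k s) = 0 := by
      rw [← normalForm_mul_xgen, hs, map_zero]
    rw [← evalWords_normalForm k s,
      eq_zero_of_rightAct_zero_eq_zero (normalForm_mem_supported k s) h0, map_zero]
  · have h0 : rightAct k (n + 1) (normalForm k s) = 0 := by
      rw [← normalForm_mul_xgen, hs, map_zero]
    obtain ⟨g, hg⟩ := mem_range_appendLetter_of_rightAct_succ_eq_zero
      (normalForm_mem_supported k s) h0
    refine ⟨evalWords k g, ?_⟩
    show evalWords k g * xgen k n = s
    rw [← evalWords_appendLetter, hg, evalWords_normalForm]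
  · rintro ⟨t, rfl⟩
    exact complex n t
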